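/- arXiv:2405.02079 — 6 statements merged into one kernel-verified Lean document; each statement's English description precedes it below -/
import Mathlib

section
/- DF-QuAD satisfies base score contestability: let T be an argumentation tree, let β be a node of T, and let T' be obtained from T by replacing the base score τ(β) of β with a strictly larger value τ'(β) ∈ [0,1], leaving all other base scores and the tree structure unchanged. Then if β is a pro node, σ(T') ≥ σ(T) (the DF-QuAD strength of the root does not decrease), and if β is a con node, σ(T') ≤ σ(T) (the strength of the root does not increase). -/
/-- An argumentation tree: a base score, a list of attacking subtrees,
and a list of supporting subtrees. -/
inductive ATree : Type
  | node (τ : ℝ) (atts : List ATree) (sups : List ATree) : ATree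

namespace ATree

/-- The DF-QuAD aggregation function `F`. -/
def aggF (vs : List ℝ) : ℝ := 1 - (vs.map (fun v => 1 - v)).prod

/-- The DF-QuAD combination function `C`. -/
noncomputable def comb (v0 va vs : ℝ) : ℝ :=
  if va = vs then v0
  else if va > vs then v0 - v0 * (va - vs)
  else v0 + (1 - v0) * (vs - va)

/-- The DF-QuAD strength of an argumentation tree. -/
noncomputable def strength : ATree → ℝ
  | .node τ atts sups =>
      comb τ (aggF (atts.attach.map fun a => strength a.1))
             (aggF (sups.attach.map fun s => strength s.1))
  decreasing_by
  · simp_wf; have := List.sizeOf_lt_of_mem a.2; omega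
  · simp_wf; have := List.sizeOf_lt_of_mem s.2; omega

/-- The QEM influence function `h`. -/
noncomputable def hQEM (v : ℝ) : ℝ := (max v 0) ^ 2 / (1 + (max v 0) ^ 2)

/-- The QEM update function `s`. -/
noncomputable def updQEM (τ E : ℝ) : ℝ := τ + (1 - τ) * hQEM E - τ * hQEM (-E)

/-- The QEM strength of an argumentation tree. -/
noncomputable def qem : ATree → ℝ
  | .node τ atts sups =>
      updQEM τ ((sups.attach.map fun s => qem s.1).sum
                 - (atts.attach.map fun a => qem a.1).sum)
  decreasing_by
  · simp_wf; have := List.sizeOf_lt_of_mem s.2; omega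
  · simp_wf; have := List.sizeOf_lt_of_mem a.2; omega

/-- All base scores lie in `[0,1]`. -/
inductive Valid : ATree → Prop
  | node {τ : ℝ} {atts sups : List ATree} :
      0 ≤ τ → τ ≤ 1 → (∀ A ∈ atts, Valid A) → (∀ S ∈ sups, Valid S) →
      Valid (node τ atts sups)

/-- All base scores lie in the open interval `(0,1)`. -/
inductive ValidOpen : ATree → Prop
  | node {τ : ℝ} {atts sups : List ATree} :
      0 < τ → τ < 1 → (∀ A ∈ atts, ValidOpen A) → (∀ S ∈ sups, ValidOpen S) →
      ValidOpen (node τ atts sups)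

/-- `At R pol T T'` holds iff `T'` is obtained from `T` by modifying it at a single
node `β` of `T` according to the local modification relation `R`, where `pol` is the
polarity of the modified node: `pol = true` means `β` is a pro node (the path from
the root to `β` crosses an even number of attack edges), `pol = false` means `β` is
a con node (odd number of attack edges).  The local relation `R` gets the polarity
of the node it acts at relative to that node itself (used for modifications, such as
attaching a new child, for which the relevant polarity is that of the new child). -/
inductive At (R : Bool → ATree → ATree → Prop) : Bool → ATree → ATree → Prop
  | here {pol : Bool} {T T' : ATree} : R pol T T' → At R pol T T'
  | att {pol : Bool} {τ : ℝ} {a₁ a₂ sups : List ATree} {A A' : ATree} :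
      At R pol A A' →
      At R (!pol) (node τ (a₁ ++ A :: a₂) sups) (node τ (a₁ ++ A' :: a₂) sups)
  | sup {pol : Bool} {τ : ℝ} {atts s₁ s₂ : List ATree} {S S' : ATree} :
      At R pol S S' →
      At R pol (node τ atts (s₁ ++ S :: s₂)) (node τ atts (s₁ ++ S' :: s₂))

/-- Local modification replacing the base score `τ₁` of a node by `τ₂`
(the polarity of a node relative to itself is `true`, i.e. pro). -/
inductive BaseUpd (τ₁ τ₂ : ℝ) : Bool → ATree → ATree → Prop
  | intro {atts sups : List ATree} :
      BaseUpd τ₁ τ₂ true (node τ₁ atts sups) (node τ₂ atts sups)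

/-- Local modification attaching a fresh leaf with base score `t` to a node, either
as an attacker (in which case the polarity of the new leaf relative to the node it is
attached to is `false`) or as a supporter (polarity `true`). -/
inductive AttachLeaf (t : ℝ) : Bool → ATree → ATree → Prop
  | attacker {τ : ℝ} {a₁ a₂ sups : List ATree} :
      AttachLeaf t false (node τ (a₁ ++ a₂) sups)
                         (node τ (a₁ ++ node t [] [] :: a₂) sups)
  | supporter {τ : ℝ} {atts s₁ s₂ : List ATree} :
      AttachLeaf t true (node τ atts (s₁ ++ s₂))
                        (node τ atts (s₁ ++ node t [] [] :: s₂))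

/-
The strength of a node is `C(τ, F(attackers), F(supporters))`, where `C` is increasing in `τ`
and in the support and decreasing in the attack, and `F` is increasing in each argument. Hence,
going up the path from `β` to the root, a raised base score propagates as a change of fixed
direction that is reversed at each attack edge and kept at each support edge.
-/

lemma strength_node (τ : ℝ) (atts sups : List ATree) :
    strength (node τ atts sups) =
      comb τ (aggF (atts.map strength)) (aggF (sups.map strength)) := by
  rw [strength]; simp only [List.attach_map_val]

lemma prod_mem_Icc {l : List ℝ} (h : ∀ v ∈ l, v ∈ Set.Icc (0 : ℝ) 1) :
    l.prod ∈ Set.Icc (0 : ℝ) 1 := by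
  induction l with
  | nil => simp
  | cons x xs ih =>
    obtain ⟨hx0, hx1⟩ := h x List.mem_cons_self
    obtain ⟨hp0, hp1⟩ := ih fun v hv => h v (List.mem_cons_of_mem x hv)
    rw [List.prod_cons]
    exact ⟨mul_nonneg hx0 hp0, mul_le_one₀ hx1 hp0 hp1⟩

lemma aggF_mem_Icc {l : List ℝ} (h : ∀ v ∈ l, v ∈ Set.Icc (0 : ℝ) 1) :
    aggF l ∈ Set.Icc (0 : ℝ) 1 := by
  have hprod : (l.map fun v => 1 - v).prod ∈ Set.Icc (0 : ℝ) 1 :=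
    prod_mem_Icc <| List.forall_mem_map.2 fun w hw =>
      ⟨by linarith [(h w hw).2], by linarith [(h w hw).1]⟩
  unfold aggF
  exact ⟨by linarith [hprod.2], by linarith [hprod.1]⟩

lemma aggF_le_aggF_of_le {l₁ l₂ : List ℝ} {x y : ℝ} (hxy : x ≤ y)
    (h : ∀ v ∈ l₁ ++ l₂, v ≤ 1) :
    aggF (l₁ ++ x :: l₂) ≤ aggF (l₁ ++ y :: l₂) := by
  have hnonneg (l : List ℝ) (hl : ∀ v ∈ l, v ≤ 1) : 0 ≤ (l.map fun v => 1 - v).prod :=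
    List.prod_nonneg <| List.forall_mem_map.2 fun w hw => sub_nonneg.2 (hl w hw)
  have h₁ := hnonneg l₁ fun v hv => h v (List.mem_append_left l₂ hv)
  have h₂ := hnonneg l₂ fun v hv => h v (List.mem_append_right l₁ hv)
  -- `aggF (l₁ ++ x :: l₂) = 1 - (1 - x) * P` with `P ≥ 0` the product over the other entries
  unfold aggF
  simp only [List.map_append, List.prod_append, List.map_cons, List.prod_cons]
  nlinarith [mul_nonneg (mul_nonneg h₁ h₂) (sub_nonneg.2 hxy)]

section comb

variable {v0 v0' va va' vs vs' : ℝ}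

lemma comb_mem_Icc (h0 : v0 ∈ Set.Icc (0 : ℝ) 1) (ha : va ∈ Set.Icc (0 : ℝ) 1)
    (hs : vs ∈ Set.Icc (0 : ℝ) 1) : comb v0 va vs ∈ Set.Icc (0 : ℝ) 1 := by
  obtain ⟨_, _⟩ := h0; obtain ⟨_, _⟩ := ha; obtain ⟨_, _⟩ := hs
  unfold comb; split_ifs <;> constructor <;> nlinarith

lemma comb_le_comb_left (h : v0 ≤ v0') (ha : va ∈ Set.Icc (0 : ℝ) 1)
    (hs : vs ∈ Set.Icc (0 : ℝ) 1) : comb v0 va vs ≤ comb v0' va vs := by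
  obtain ⟨_, _⟩ := ha; obtain ⟨_, _⟩ := hs
  unfold comb; split_ifs <;> nlinarith

lemma comb_le_comb_of_attack_le (h : va ≤ va') (h0 : v0 ∈ Set.Icc (0 : ℝ) 1) :
    comb v0 va' vs ≤ comb v0 va vs := by
  obtain ⟨_, _⟩ := h0
  unfold comb; split_ifs <;> nlinarith

lemma comb_le_comb_of_support_le (h : vs ≤ vs') (h0 : v0 ∈ Set.Icc (0 : ℝ) 1) :
    comb v0 va vs ≤ comb v0 va vs' := by
  obtain ⟨_, _⟩ := h0
  unfold comb; split_ifs <;> nlinarith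

end comb

lemma strength_mem_Icc {T : ATree} (hT : T.Valid) : T.strength ∈ Set.Icc (0 : ℝ) 1 := by
  induction hT with
  | node h0 h1 _ _ iha ihs =>
    rw [strength_node]
    exact comb_mem_Icc ⟨h0, h1⟩ (aggF_mem_Icc (List.forall_mem_map.2 iha))
      (aggF_mem_Icc (List.forall_mem_map.2 ihs))

lemma aggF_map_strength_mem_Icc {l : List ATree} (h : ∀ X ∈ l, X.Valid) :
    aggF (l.map strength) ∈ Set.Icc (0 : ℝ) 1 :=
  aggF_mem_Icc <| List.forall_mem_map.2 fun X hX => strength_mem_Icc (h X hX)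

lemma strength_le_one_of_mem_map {l₁ l₂ : List ATree} (h : ∀ X ∈ l₁ ++ l₂, X.Valid) :
    ∀ v ∈ l₁.map strength ++ l₂.map strength, v ≤ 1 := by
  rw [← List.map_append]
  exact List.forall_mem_map.2 fun X hX => (strength_mem_Icc (h X hX)).2

lemma strength_node_le_strength_node_left {τ τ' : ℝ} {atts sups : List ATree}
    (hτ : τ ≤ τ') (ha : ∀ X ∈ atts, X.Valid) (hs : ∀ X ∈ sups, X.Valid) :
    (node τ atts sups).strength ≤ (node τ' atts sups).strength := by
  rw [strength_node, strength_node]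
  exact comb_le_comb_left hτ (aggF_map_strength_mem_Icc ha) (aggF_map_strength_mem_Icc hs)

lemma strength_node_le_strength_node_of_attacker_le {τ : ℝ} {a₁ a₂ sups : List ATree}
    {A A' : ATree} (hA : A.strength ≤ A'.strength) (hτ : τ ∈ Set.Icc (0 : ℝ) 1)
    (ha : ∀ X ∈ a₁ ++ a₂, X.Valid) :
    (node τ (a₁ ++ A' :: a₂) sups).strength ≤ (node τ (a₁ ++ A :: a₂) sups).strength := by
  rw [strength_node, strength_node]
  simp only [List.map_append, List.map_cons]
  exact comb_le_comb_of_attack_le (aggF_le_aggF_of_le hA (strength_le_one_of_mem_map ha)) hτ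

lemma strength_node_le_strength_node_of_supporter_le {τ : ℝ} {atts s₁ s₂ : List ATree}
    {S S' : ATree} (hS : S.strength ≤ S'.strength) (hτ : τ ∈ Set.Icc (0 : ℝ) 1)
    (hs : ∀ X ∈ s₁ ++ s₂, X.Valid) :
    (node τ atts (s₁ ++ S :: s₂)).strength ≤ (node τ atts (s₁ ++ S' :: s₂)).strength := by
  rw [strength_node, strength_node]
  simp only [List.map_append, List.map_cons]
  exact comb_le_comb_of_support_le (aggF_le_aggF_of_le hS (strength_le_one_of_mem_map hs)) hτ

end ATree

open ATree in
theorem dfquad_base_score_contestability_general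
    {T T' : ATree} {τ₁ τ₂ : ℝ} {pol : Bool}
    (hT : T.Valid) (hlt : τ₁ < τ₂)
    (hAt : At (BaseUpd τ₁ τ₂) pol T T') :
    (pol = true → T.strength ≤ T'.strength) ∧
    (pol = false → T'.strength ≤ T.strength) := by
  have siblings_valid {l₁ l₂ : List ATree} {X : ATree} (h : ∀ Y ∈ l₁ ++ X :: l₂, Y.Valid) :
      ∀ Y ∈ l₁ ++ l₂, Y.Valid :=
    fun Y hY => h Y (((List.sublist_cons_self X l₂).append_left l₁).subset hY)
  induction hAt with
  | here hR =>
    obtain ⟨⟩ := hR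
    obtain ⟨_, _, ha, hs⟩ := hT
    exact ⟨fun _ => strength_node_le_strength_node_left hlt.le ha hs, nofun⟩
  | @att pol _ _ _ _ A _ _ ih =>
    obtain ⟨h0, h1, ha, _⟩ := hT
    have ihA := ih (ha A (by simp))
    cases pol
    · exact ⟨fun _ => strength_node_le_strength_node_of_attacker_le (ihA.2 rfl) ⟨h0, h1⟩
        (siblings_valid ha), nofun⟩
    · exact ⟨nofun, fun _ => strength_node_le_strength_node_of_attacker_le (ihA.1 rfl) ⟨h0, h1⟩
        (siblings_valid ha)⟩
  | @sup pol _ _ _ _ S _ _ ih =>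
    obtain ⟨h0, h1, _, hs⟩ := hT
    have ihS := ih (hs S (by simp))
    cases pol
    · exact ⟨nofun, fun _ => strength_node_le_strength_node_of_supporter_le (ihS.2 rfl)
        ⟨h0, h1⟩ (siblings_valid hs)⟩
    · exact ⟨fun _ => strength_node_le_strength_node_of_supporter_le (ihS.1 rfl) ⟨h0, h1⟩
        (siblings_valid hs), nofun⟩

open ATree in
/-- DF-QuAD satisfies base score contestability: if `T'` is obtained from `T` by
replacing the base score `τ₁` of a node `β` of `T` with a strictly larger value
`τ₂ ∈ [0,1]`, leaving everything else unchanged, then σ(T') ≥ σ(T) if `β` is a pro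
node, and σ(T') ≤ σ(T) if `β` is a con node. -/
theorem dfquad_base_score_contestability
    {T T' : ATree} {τ₁ τ₂ : ℝ} {pol : Bool}
    (hT : T.Valid) (hlt : τ₁ < τ₂) (h0 : 0 ≤ τ₂) (h1 : τ₂ ≤ 1)
    (hAt : At (BaseUpd τ₁ τ₂) pol T T') :
    (pol = true → T.strength ≤ T'.strength) ∧
    (pol = false → T'.strength ≤ T.strength) :=
  dfquad_base_score_contestability_general hT hlt hAt
end

section
/- DF-QuAD satisfies argument relation contestability: let T be an argumentation tree, let α be a node of T, and let T' be obtained from T by attaching to α a new leaf subtree β (with no attackers or supporters) with base score τ' ∈ [0,1], either as an attacker or as a supporter of α, leaving everything else unchanged. Then if β is a pro node of T', σ(T') ≥ σ(T) (the DF-QuAD strength of the root does not decrease), and if β is a con node of T', σ(T') ≤ σ(T) (the strength of the root does not increase). -/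
namespace ATree

lemma strength_leaf (t : ℝ) : strength (node t [] []) = t := by
  rw [strength_node]; simp [aggF, comb]

lemma prod_one_sub_nonneg {l : List ℝ} (h : ∀ v ∈ l, v ≤ 1) :
    0 ≤ (l.map (fun v => 1 - v)).prod := by
  apply List.prod_nonneg
  intro a ha
  simp only [List.mem_map] at ha
  obtain ⟨v, hv, rfl⟩ := ha
  linarith [h v hv]

lemma comb_mono {v0 va va' vs vs' : ℝ} (h0 : 0 ≤ v0) (h1 : v0 ≤ 1)
    (ha : va' ≤ va) (hs : vs ≤ vs') : comb v0 va vs ≤ comb v0 va' vs' := by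
  unfold comb
  split_ifs <;> nlinarith [mul_nonneg h0 (sub_nonneg.2 ha), mul_nonneg h0 (sub_nonneg.2 hs),
    mul_nonneg (sub_nonneg.2 h1) (sub_nonneg.2 ha), mul_nonneg (sub_nonneg.2 h1) (sub_nonneg.2 hs)]

lemma comb_mem {v0 va vs : ℝ} (h0 : 0 ≤ v0) (h1 : v0 ≤ 1)
    (ha0 : 0 ≤ va) (ha1 : va ≤ 1) (hs0 : 0 ≤ vs) (hs1 : vs ≤ 1) :
    0 ≤ comb v0 va vs ∧ comb v0 va vs ≤ 1 := by
  unfold comb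
  split_ifs <;> constructor <;> nlinarith

lemma prod_mem {l : List ℝ} (h : ∀ v ∈ l, 0 ≤ v ∧ v ≤ 1) :
    0 ≤ (l.map (fun v => 1 - v)).prod ∧ (l.map (fun v => 1 - v)).prod ≤ 1 := by
  induction l with
  | nil => simp
  | cons a l ih =>
    simp only [List.map_cons, List.prod_cons]
    obtain ⟨ha0, ha1⟩ := h a (by simp)
    obtain ⟨ih0, ih1⟩ := ih (fun v hv => h v (by simp [hv]))
    constructor <;> nlinarith

lemma aggF_mem {l : List ℝ} (h : ∀ v ∈ l, 0 ≤ v ∧ v ≤ 1) :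
    0 ≤ aggF l ∧ aggF l ≤ 1 := by
  obtain ⟨h0, h1⟩ := prod_mem h
  unfold aggF
  constructor <;> linarith

lemma aggF_le_at {l₁ l₂ : List ℝ} {x y : ℝ} (hxy : x ≤ y)
    (h₁ : ∀ v ∈ l₁, v ≤ 1) (h₂ : ∀ v ∈ l₂, v ≤ 1) :
    aggF (l₁ ++ x :: l₂) ≤ aggF (l₁ ++ y :: l₂) := by
  unfold aggF
  simp only [List.map_append, List.map_cons, List.prod_append, List.prod_cons]
  have p1 := prod_one_sub_nonneg h₁
  have p2 := prod_one_sub_nonneg h₂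
  nlinarith [mul_nonneg (mul_nonneg p1 p2) (sub_nonneg.2 hxy)]

lemma aggF_insert {l₁ l₂ : List ℝ} {t : ℝ} (ht0 : 0 ≤ t)
    (h₁ : ∀ v ∈ l₁, v ≤ 1) (h₂ : ∀ v ∈ l₂, v ≤ 1) :
    aggF (l₁ ++ l₂) ≤ aggF (l₁ ++ t :: l₂) := by
  unfold aggF
  simp only [List.map_append, List.map_cons, List.prod_append, List.prod_cons]
  have p1 := prod_one_sub_nonneg h₁
  have p2 := prod_one_sub_nonneg h₂
  nlinarith [mul_nonneg (mul_nonneg p1 p2) ht0]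

lemma strength_mem : ∀ T : ATree, Valid T → 0 ≤ T.strength ∧ T.strength ≤ 1
  | .node τ atts sups, Valid.node h0 h1 hA hS => by
    rw [strength_node]
    refine comb_mem h0 h1 ?_ ?_ ?_ ?_
    · exact (aggF_mem (fun v hv => by
        simp only [List.mem_map] at hv
        obtain ⟨A, hA', rfl⟩ := hv
        exact strength_mem A (hA A hA'))).1
    · exact (aggF_mem (fun v hv => by
        simp only [List.mem_map] at hv
        obtain ⟨A, hA', rfl⟩ := hv
        exact strength_mem A (hA A hA'))).2
    · exact (aggF_mem (fun v hv => by
        simp only [List.mem_map] at hv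
        obtain ⟨S, hS', rfl⟩ := hv
        exact strength_mem S (hS S hS'))).1
    · exact (aggF_mem (fun v hv => by
        simp only [List.mem_map] at hv
        obtain ⟨S, hS', rfl⟩ := hv
        exact strength_mem S (hS S hS'))).2
  termination_by T => sizeOf T
  decreasing_by
  all_goals simp_wf
  · have := List.sizeOf_lt_of_mem hA'; omega
  · have := List.sizeOf_lt_of_mem hA'; omega
  · have := List.sizeOf_lt_of_mem hS'; omega
  · have := List.sizeOf_lt_of_mem hS'; omega

lemma map_le_one {l : List ATree} (h : ∀ A ∈ l, Valid A) :
    ∀ v ∈ l.map strength, v ≤ 1 := by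
  intro v hv
  simp only [List.mem_map] at hv
  obtain ⟨A, hA, rfl⟩ := hv
  exact (strength_mem A (h A hA)).2

lemma dfquad_aux {t : ℝ} (h0 : 0 ≤ t) (h1 : t ≤ 1) :
    ∀ {pol : Bool} {T T' : ATree}, At (AttachLeaf t) pol T T' → T.Valid →
    (pol = true → T.strength ≤ T'.strength) ∧
    (pol = false → T'.strength ≤ T.strength) := by
  intro pol T T' hAt
  induction hAt with
  | here h =>
    intro hT
    cases h with
    | @attacker τ a₁ a₂ sups =>
      cases hT with
      | node hτ0 hτ1 hA hS =>
        refine ⟨by simp, fun _ => ?_⟩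
        rw [strength_node, strength_node]
        refine comb_mono hτ0 hτ1 ?_ le_rfl
        simp only [List.map_append, List.map_cons, strength_leaf]
        exact aggF_insert h0 (map_le_one fun B hB => hA B (by simp [hB]))
                             (map_le_one fun B hB => hA B (by simp [hB]))
    | @supporter τ atts s₁ s₂ =>
      cases hT with
      | node hτ0 hτ1 hA hS =>
        refine ⟨fun _ => ?_, by simp⟩
        rw [strength_node, strength_node]
        refine comb_mono hτ0 hτ1 le_rfl ?_
        simp only [List.map_append, List.map_cons, strength_leaf]
        exact aggF_insert h0 (map_le_one fun B hB => hS B (by simp [hB]))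
                             (map_le_one fun B hB => hS B (by simp [hB]))
  | @att pol τ a₁ a₂ sups A A' hsub ih =>
    intro hT
    cases hT with
    | node hτ0 hτ1 hA hS =>
      have hVA : Valid A := hA A (by simp)
      obtain ⟨ih1, ih2⟩ := ih hVA
      constructor
      · intro hp
        have hpf : pol = false := by cases pol <;> simp_all
        have hle : A'.strength ≤ A.strength := ih2 hpf
        rw [strength_node, strength_node]
        refine comb_mono hτ0 hτ1 ?_ le_rfl
        simp only [List.map_append, List.map_cons]
        exact aggF_le_at hle (map_le_one fun B hB => hA B (by simp [hB]))
                             (map_le_one fun B hB => hA B (by simp [hB]))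
      · intro hp
        have hpt : pol = true := by cases pol <;> simp_all
        have hle : A.strength ≤ A'.strength := ih1 hpt
        rw [strength_node, strength_node]
        refine comb_mono hτ0 hτ1 ?_ le_rfl
        simp only [List.map_append, List.map_cons]
        exact aggF_le_at hle (map_le_one fun B hB => hA B (by simp [hB]))
                             (map_le_one fun B hB => hA B (by simp [hB]))
  | @sup pol τ atts s₁ s₂ S S' hsub ih =>
    intro hT
    cases hT with
    | node hτ0 hτ1 hA hS =>
      have hVS : Valid S := hS S (by simp)
      obtain ⟨ih1, ih2⟩ := ih hVS
      constructor
      · intro hp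
        have hle : S.strength ≤ S'.strength := ih1 hp
        rw [strength_node, strength_node]
        refine comb_mono hτ0 hτ1 le_rfl ?_
        simp only [List.map_append, List.map_cons]
        exact aggF_le_at hle (map_le_one fun B hB => hS B (by simp [hB]))
                             (map_le_one fun B hB => hS B (by simp [hB]))
      · intro hp
        have hle : S'.strength ≤ S.strength := ih2 hp
        rw [strength_node, strength_node]
        refine comb_mono hτ0 hτ1 le_rfl ?_
        simp only [List.map_append, List.map_cons]
        exact aggF_le_at hle (map_le_one fun B hB => hS B (by simp [hB]))
                             (map_le_one fun B hB => hS B (by simp [hB]))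

end ATree
open ATree in
/-- DF-QuAD satisfies argument relation contestability: if `T'` is obtained from `T`
by attaching to a node `α` of `T` a new leaf `β` with base score `t ∈ [0,1]`, either
as an attacker or as a supporter of `α`, then σ(T') ≥ σ(T) if `β` is a pro node of
`T'`, and σ(T') ≤ σ(T) if `β` is a con node of `T'`. -/
theorem dfquad_argument_relation_contestability
    {T T' : ATree} {t : ℝ} {pol : Bool}
    (hT : T.Valid) (h0 : 0 ≤ t) (h1 : t ≤ 1)
    (hAt : At (AttachLeaf t) pol T T') :
    (pol = true → T.strength ≤ T'.strength) ∧
    (pol = false → T'.strength ≤ T.strength) :=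
  ATree.dfquad_aux h0 h1 hAt hT
end

section
/- The quadratic energy model (QEM) semantics satisfies base score contestability: let T be an argumentation tree, let β be a node of T, and let T' be obtained from T by replacing the base score τ(β) of β with a strictly larger value τ'(β) ∈ [0,1], leaving all other base scores and the tree structure unchanged. Then if β is a pro node, σ_QEM(T') ≥ σ_QEM(T), and if β is a con node, σ_QEM(T') ≤ σ_QEM(T). -/
namespace ATree

lemma hQEM_nonneg (v : ℝ) : 0 ≤ hQEM v := by
  unfold hQEM
  positivity

lemma hQEM_le_one (v : ℝ) : hQEM v ≤ 1 := by
  unfold hQEM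
  rw [div_le_one (by positivity)]
  nlinarith [sq_nonneg (max v 0)]

lemma hQEM_of_nonpos {v : ℝ} (h : v ≤ 0) : hQEM v = 0 := by
  unfold hQEM
  rw [max_eq_right h]
  simp

lemma hQEM_mono {a b : ℝ} (h : a ≤ b) : hQEM a ≤ hQEM b := by
  unfold hQEM
  have h1 : (0:ℝ) ≤ max a 0 := le_max_right _ _
  have h2 : max a 0 ≤ max b 0 := max_le_max h le_rfl
  rw [div_le_div_iff₀ (by positivity) (by positivity)]
  nlinarith

lemma hQEM_add_hQEM_neg_le_one (E : ℝ) : hQEM E + hQEM (-E) ≤ 1 := by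
  rcases le_total E 0 with h | h
  · rw [hQEM_of_nonpos h]
    simpa using hQEM_le_one (-E)
  · rw [hQEM_of_nonpos (by linarith : -E ≤ 0)]
    simpa using hQEM_le_one E

lemma updQEM_mono_tau {t1 t2 E : ℝ} (h : t1 ≤ t2) :
    updQEM t1 E ≤ updQEM t2 E := by
  unfold updQEM
  have := hQEM_add_hQEM_neg_le_one E
  nlinarith

lemma updQEM_mono_E {t E1 E2 : ℝ} (h0 : 0 ≤ t) (h1 : t ≤ 1) (h : E1 ≤ E2) :
    updQEM t E1 ≤ updQEM t E2 := by
  unfold updQEM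
  have h2 : hQEM E1 ≤ hQEM E2 := hQEM_mono h
  have h3 : hQEM (-E2) ≤ hQEM (-E1) := hQEM_mono (by linarith)
  nlinarith

lemma qem_node (τ : ℝ) (atts sups : List ATree) :
    qem (node τ atts sups)
      = updQEM τ ((sups.map qem).sum - (atts.map qem).sum) := by
  rw [qem]
  congr 1 <;> simp

theorem qem_aux {τ₁ τ₂ : ℝ} (hlt : τ₁ < τ₂) (h0 : 0 ≤ τ₂) (h1 : τ₂ ≤ 1)
    {pol : Bool} {T T' : ATree} (hAt : At (BaseUpd τ₁ τ₂) pol T T') :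
    T.Valid →
    (pol = true → T.qem ≤ T'.qem) ∧ (pol = false → T'.qem ≤ T.qem) := by
  induction hAt with
  | @here pol T T' h =>
    intro hT
    cases h with
    | intro =>
      cases hT with
      | node ha hb _ _ =>
        constructor
        · intro _
          rw [qem_node, qem_node]
          exact updQEM_mono_tau hlt.le
        · intro hc; cases hc
  | @att pol τ a₁ a₂ sups A A' h ih =>
    intro hT
    cases hT with
    | node ha hb hatts hsups =>
      have hA : A.Valid := hatts A (by simp)
      have ih' := ih hA
      rw [qem_node, qem_node]
      simp only [List.map_append, List.map_cons, List.sum_append, List.sum_cons]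
      constructor
      · intro hp
        have : A'.qem ≤ A.qem := ih'.2 (by simpa using hp)
        exact updQEM_mono_E ha hb (by linarith)
      · intro hp
        have : A.qem ≤ A'.qem := ih'.1 (by simpa using hp)
        exact updQEM_mono_E ha hb (by linarith)
  | @sup pol τ atts s₁ s₂ S S' h ih =>
    intro hT
    cases hT with
    | node ha hb hatts hsups =>
      have hS : S.Valid := hsups S (by simp)
      have ih' := ih hS
      rw [qem_node, qem_node]
      simp only [List.map_append, List.map_cons, List.sum_append, List.sum_cons]
      constructor
      · intro hp
        have : S.qem ≤ S'.qem := ih'.1 hp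
        exact updQEM_mono_E ha hb (by linarith)
      · intro hp
        have : S'.qem ≤ S.qem := ih'.2 hp
        exact updQEM_mono_E ha hb (by linarith)

end ATree

open ATree in
/-- QEM satisfies base score contestability: if `T'` is obtained from `T` by
replacing the base score `τ₁` of a node `β` of `T` with a strictly larger value
`τ₂ ∈ [0,1]`, then σ_QEM(T') ≥ σ_QEM(T) if `β` is a pro node, and
σ_QEM(T') ≤ σ_QEM(T) if `β` is a con node. -/
theorem qem_base_score_contestability
    {T T' : ATree} {τ₁ τ₂ : ℝ} {pol : Bool}
    (hT : T.Valid) (hlt : τ₁ < τ₂) (h0 : 0 ≤ τ₂) (h1 : τ₂ ≤ 1)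
    (hAt : At (BaseUpd τ₁ τ₂) pol T T') :
    (pol = true → T.qem ≤ T'.qem) ∧
    (pol = false → T'.qem ≤ T.qem) := by
  exact ATree.qem_aux hlt h0 h1 hAt hT
end

section
/- QEM satisfies strong (strict) base score contestability on trees with interior base scores: let T be an argumentation tree all of whose base scores lie in the open interval (0,1), let β be a node of T, and let T' be obtained from T by replacing the base score τ(β) of β with a strictly larger value τ'(β) ∈ (0,1), leaving everything else unchanged. Then if β is a pro node, σ_QEM(T') > σ_QEM(T), and if β is a con node, σ_QEM(T') < σ_QEM(T). -/
namespace ATree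

lemma hQEM_lt_one (v : ℝ) : hQEM v < 1 := by
  unfold hQEM
  rw [div_lt_one (by positivity)]
  linarith

lemma hQEM_mono_s4 {v w : ℝ} (h : v ≤ w) : hQEM v ≤ hQEM w := by
  unfold hQEM
  have h0 : (0:ℝ) ≤ max v 0 := le_max_right _ _
  have h1 : max v 0 ≤ max w 0 := max_le_max h le_rfl
  have h2 : (max v 0)^2 ≤ (max w 0)^2 := by nlinarith
  rw [div_le_div_iff₀ (by positivity) (by positivity)]
  nlinarith

lemma hQEM_strictMono {v w : ℝ} (h : v < w) (hw : 0 < w) : hQEM v < hQEM w := by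
  unfold hQEM
  have h0 : (0:ℝ) ≤ max v 0 := le_max_right _ _
  have h1 : max v 0 < max w 0 := by
    rw [max_eq_left hw.le]
    exact max_lt h hw
  have h2 : (max v 0)^2 < (max w 0)^2 := by nlinarith
  rw [div_lt_div_iff₀ (by positivity) (by positivity)]
  nlinarith

lemma updQEM_mono_tau_s4 {τ₁ τ₂ E : ℝ} (h : τ₁ < τ₂) : updQEM τ₁ E < updQEM τ₂ E := by
  unfold updQEM
  have h1 := hQEM_lt_one E
  have h2 := hQEM_lt_one (-E)
  rcases le_total E 0 with hE | hE
  · rw [hQEM_of_nonpos hE]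
    nlinarith
  · rw [hQEM_of_nonpos (by linarith : -E ≤ 0)]
    nlinarith

lemma updQEM_mono_E_s4 {τ E₁ E₂ : ℝ} (h0 : 0 < τ) (h1 : τ < 1) (h : E₁ < E₂) :
    updQEM τ E₁ < updQEM τ E₂ := by
  unfold updQEM
  have ha : hQEM E₁ ≤ hQEM E₂ := hQEM_mono_s4 h.le
  have hb : hQEM (-E₂) ≤ hQEM (-E₁) := hQEM_mono_s4 (by linarith)
  rcases lt_or_ge 0 E₂ with hE | hE
  · have := hQEM_strictMono h hE
    nlinarith
  · have := hQEM_strictMono (show -E₂ < -E₁ by linarith) (by linarith)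
    nlinarith

end ATree

open ATree in
/-- QEM satisfies strong (strict) base score contestability on trees with all base
scores in the open interval `(0,1)`: if `T'` is obtained from `T` by replacing the
base score `τ₁` of a node `β` of `T` with a strictly larger value `τ₂ ∈ (0,1)`,
then σ_QEM(T') > σ_QEM(T) if `β` is a pro node, and σ_QEM(T') < σ_QEM(T) if `β` is
a con node. -/
theorem qem_strong_base_score_contestability
    {T T' : ATree} {τ₁ τ₂ : ℝ} {pol : Bool}
    (hT : T.ValidOpen) (hlt : τ₁ < τ₂) (h0 : 0 < τ₂) (h1 : τ₂ < 1)
    (hAt : At (BaseUpd τ₁ τ₂) pol T T') :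
    (pol = true → T.qem < T'.qem) ∧
    (pol = false → T'.qem < T.qem) := by
  revert hT
  induction hAt with
  | here h =>
      intro _
      cases h with
      | @intro atts sups =>
          refine ⟨fun _ => ?_, fun h => by simp at h⟩
          rw [qem_node, qem_node]
          exact updQEM_mono_tau_s4 hlt
  | @att pol τ a₁ a₂ sups A A' hA ih =>
      intro hT
      cases hT with
      | node ht0 ht1 hatts hsups =>
      have hAV : A.ValidOpen := hatts A (by simp)
      have ih := ih (hatts A (by simp))
      rw [qem_node, qem_node]
      simp only [List.map_append, List.map_cons, List.sum_append, List.sum_cons]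
      cases pol with
      | true =>
          refine ⟨fun h => by simp at h, fun _ => ?_⟩
          have := ih.1 rfl
          exact updQEM_mono_E_s4 ht0 ht1 (by linarith)
      | false =>
          refine ⟨fun _ => ?_, fun h => by simp at h⟩
          have := ih.2 rfl
          exact updQEM_mono_E_s4 ht0 ht1 (by linarith)
  | @sup pol τ atts s₁ s₂ S S' hS ih =>
      intro hT
      cases hT with
      | node ht0 ht1 hatts hsups =>
      have ih := ih (hsups S (by simp))
      rw [qem_node, qem_node]
      simp only [List.map_append, List.map_cons, List.sum_append, List.sum_cons]
      cases pol with
      | true =>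
          refine ⟨fun _ => ?_, fun h => by simp at h⟩
          have := ih.1 rfl
          exact updQEM_mono_E_s4 ht0 ht1 (by linarith)
      | false =>
          refine ⟨fun h => by simp at h, fun _ => ?_⟩
          have := ih.2 rfl
          exact updQEM_mono_E_s4 ht0 ht1 (by linarith)
end

section
/- QEM satisfies strong (strict) argument relation contestability on trees with interior base scores: let T be an argumentation tree all of whose base scores lie in the open interval (0,1), let α be a node of T, and let T' be obtained from T by attaching to α a new leaf subtree β (with no attackers or supporters) with base score τ' ∈ (0,1], either as an attacker or as a supporter of α, leaving everything else unchanged. Then if β is a pro node of T', σ_QEM(T') > σ_QEM(T), and if β is a con node of T', σ_QEM(T') < σ_QEM(T). -/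
namespace ATree

lemma hQEM_monotone : Monotone hQEM := by
  intro a b hab
  have hmax : max a 0 ≤ max b 0 := max_le_max_right 0 hab
  simp only [hQEM]
  rw [div_le_div_iff₀ (by positivity) (by positivity)]
  nlinarith [pow_le_pow_left₀ (le_max_right a 0) hmax 2]

lemma hQEM_lt_hQEM {a b : ℝ} (hb : 0 < b) (hab : a < b) : hQEM a < hQEM b := by
  have hmax : max a 0 < b := max_lt hab hb
  simp only [hQEM, max_eq_left hb.le]
  rw [div_lt_div_iff₀ (by positivity) (by positivity)]
  nlinarith [pow_lt_pow_left₀ hmax (le_max_right a 0) two_ne_zero]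

lemma updQEM_strictMono {τ : ℝ} (hτ0 : 0 < τ) (hτ1 : τ < 1) : StrictMono (updQEM τ) := by
  intro E₁ E₂ hE
  have hpos := hQEM_monotone hE.le
  have hneg := hQEM_monotone (neg_le_neg hE.le)
  simp only [updQEM]
  rcases lt_or_ge 0 E₂ with h2 | h2
  · nlinarith [hQEM_lt_hQEM h2 hE]
  · nlinarith [hQEM_lt_hQEM (by linarith : 0 < -E₁) (neg_lt_neg hE)]

lemma qem_node_lt_qem_node {τ : ℝ} (hτ0 : 0 < τ) (hτ1 : τ < 1) {atts sups atts' sups' : List ATree}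
    (h : (sups.map qem).sum - (atts.map qem).sum < (sups'.map qem).sum - (atts'.map qem).sum) :
    qem (node τ atts sups) < qem (node τ atts' sups') := by
  rw [qem_node, qem_node]
  exact updQEM_strictMono hτ0 hτ1 h

lemma qem_leaf (t : ℝ) : qem (node t [] []) = t := by
  simp [qem_node, updQEM, hQEM_of_nonpos le_rfl]

end ATree

open ATree in
theorem qem_strong_argument_relation_contestability_general
    {T T' : ATree} {t : ℝ} {pol : Bool}
    (hT : T.ValidOpen) (h0 : 0 < t)
    (hAt : At (AttachLeaf t) pol T T') :
    (pol = true → T.qem < T'.qem) ∧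
    (pol = false → T'.qem < T.qem) := by
  induction hAt with
  | here hleaf =>
    obtain ⟨hτ0, hτ1, -, -⟩ := hT
    cases hleaf with
    | attacker => exact ⟨nofun, fun _ => qem_node_lt_qem_node hτ0 hτ1 (by simp [qem_leaf]; linarith)⟩
    | supporter => exact ⟨fun _ => qem_node_lt_qem_node hτ0 hτ1 (by simp [qem_leaf]; linarith), nofun⟩
  | att _ ih =>
    obtain ⟨hτ0, hτ1, hatts, -⟩ := hT
    obtain ⟨ih_pro, ih_con⟩ := ih (hatts _ (by simp))
    refine ⟨fun hpol => ?_, fun hpol => ?_⟩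
    · exact qem_node_lt_qem_node hτ0 hτ1 (by simp; linarith [ih_con (by simpa using hpol)])
    · exact qem_node_lt_qem_node hτ0 hτ1 (by simp; linarith [ih_pro (by simpa using hpol)])
  | sup _ ih =>
    obtain ⟨hτ0, hτ1, -, hsups⟩ := hT
    obtain ⟨ih_pro, ih_con⟩ := ih (hsups _ (by simp))
    refine ⟨fun hpol => ?_, fun hpol => ?_⟩
    · exact qem_node_lt_qem_node hτ0 hτ1 (by simp; linarith [ih_pro hpol])
    · exact qem_node_lt_qem_node hτ0 hτ1 (by simp; linarith [ih_con hpol])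

open ATree in
/-- QEM satisfies strong (strict) argument relation contestability on trees with all
base scores in the open interval `(0,1)`: if `T'` is obtained from `T` by attaching
to a node `α` of `T` a new leaf `β` with base score `t ∈ (0,1]`, either as an
attacker or as a supporter of `α`, then σ_QEM(T') > σ_QEM(T) if `β` is a pro node of
`T'`, and σ_QEM(T') < σ_QEM(T) if `β` is a con node of `T'`. -/
theorem qem_strong_argument_relation_contestability
    {T T' : ATree} {t : ℝ} {pol : Bool}
    (hT : T.ValidOpen) (h0 : 0 < t) (h1 : t ≤ 1)
    (hAt : At (AttachLeaf t) pol T T') :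
    (pol = true → T.qem < T'.qem) ∧
    (pol = false → T'.qem < T.qem) :=
  qem_strong_argument_relation_contestability_general hT h0 hAt
end

section
/- The QEM strength of every node of an argumentation tree lies in [0,1]: for every argumentation tree T (all of whose base scores lie in [0,1]), σ_QEM(T) ∈ [0,1]. -/
lemma hQEM_mem (v : ℝ) : ATree.hQEM v ∈ Set.Icc (0:ℝ) 1 := by
  have h0 : (0:ℝ) < 1 + (max v 0)^2 := by positivity
  unfold ATree.hQEM
  constructor
  · exact div_nonneg (by positivity) h0.le
  · rw [div_le_one h0]; linarith

lemma updQEM_mem {τ : ℝ} (h0 : 0 ≤ τ) (h1 : τ ≤ 1) (E : ℝ) :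
    ATree.updQEM τ E ∈ Set.Icc (0:ℝ) 1 := by
  obtain ⟨a0, a1⟩ := hQEM_mem E
  obtain ⟨b0, b1⟩ := hQEM_mem (-E)
  unfold ATree.updQEM
  constructor <;> nlinarith

open ATree in
/-- The QEM strength of every node of an argumentation tree lies in `[0,1]`:
since every node of a tree is the root of one of its (valid) subtrees, this is
captured by the statement for all valid trees. -/
theorem qem_strength_mem_Icc {T : ATree} (hT : T.Valid) :
    T.qem ∈ Set.Icc (0 : ℝ) 1 := by
  induction hT with
  | @node τ atts sups h0 h1 _ _ ihA ihS =>
    rw [ATree.qem]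
    exact updQEM_mem h0 h1 _
end
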